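/- arXiv:1801.06290 — 5 statements merged into one kernel-verified Lean document; each statement's English description precedes it below -/
import Mathlib

section
/- Let γ ∈ (0°, 180°) and let p₀, p₁, …, p_k be points in the plane such that there exists a unit vector d with the property that the angle between every edge vector p_{i+1} − p_i and d is at most γ/2 (i.e., all edge vectors lie in a closed wedge of angular width γ). Then the total Euclidean length Σᵢ ‖p_{i+1} − p_i‖ of the path is at most (1/cos(γ/2)) · ‖p_k − p₀‖. -/
open Real

noncomputable section

/-- Euclidean dot product of two plane vectors (represented as complex numbers). -/
def dot2 (u v : ℂ) : ℝ := u.re * v.re + u.im * v.im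

open Finset RealInnerProductSpace

/-! Project the path onto `d`: each edge `eᵢ` has projection `⟪eᵢ, d⟫ ≥ cos (γ/2) ‖eᵢ‖`,
and the projections telescope to `⟪p k - p 0, d⟫ ≤ ‖p k - p 0‖`. -/

lemma dot2_eq_inner (u v : ℂ) : dot2 u v = ⟪u, v⟫ := by
  simp only [dot2, Complex.inner, Complex.mul_re, Complex.conj_re, Complex.conj_im]
  ring

section InnerProductSpace

variable {E : Type*} [NormedAddCommGroup E] [InnerProductSpace ℝ E]

lemma sum_range_inner_sub (p : ℕ → E) (d : E) (k : ℕ) :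
    ∑ i ∈ range k, ⟪p (i + 1) - p i, d⟫ = ⟪p k - p 0, d⟫ := by
  simp only [inner_sub_left]
  exact sum_range_sub (fun i => ⟪p i, d⟫) k

lemma sum_norm_sub_mul_le_norm_sub {c : ℝ} {d : E} (hd : ‖d‖ ≤ 1) (p : ℕ → E) (k : ℕ)
    (h : ∀ i < k, ‖p (i + 1) - p i‖ * c ≤ ⟪p (i + 1) - p i, d⟫) :
    (∑ i ∈ range k, ‖p (i + 1) - p i‖) * c ≤ ‖p k - p 0‖ :=
  calc (∑ i ∈ range k, ‖p (i + 1) - p i‖) * c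
      = ∑ i ∈ range k, ‖p (i + 1) - p i‖ * c := sum_mul _ _ _
    _ ≤ ∑ i ∈ range k, ⟪p (i + 1) - p i, d⟫ :=
        sum_le_sum fun i hi => h i (mem_range.mp hi)
    _ = ⟪p k - p 0, d⟫ := sum_range_inner_sub p d k
    _ ≤ ‖p k - p 0‖ * ‖d‖ := real_inner_le_norm _ _
    _ ≤ ‖p k - p 0‖ := mul_le_of_le_one_right (norm_nonneg _) hd

end InnerProductSpace

/-- If all edge vectors of a polygonal path lie in a closed wedge of
angular width `γ` (i.e. make angle at most `γ/2` with a common unit direction `d`),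
then the total length of the path is at most `(1 / cos (γ/2)) * ‖p k - p 0‖`. -/
theorem angle_monotone_path_stretch (γ : ℝ) (hγ0 : 0 < γ) (hγπ : γ < π)
    (k : ℕ) (p : ℕ → ℂ)
    (h : ∃ d : ℂ, ‖d‖ = 1 ∧ ∀ i < k,
      ‖p (i + 1) - p i‖ * Real.cos (γ / 2) ≤ dot2 (p (i + 1) - p i) d) :
    ∑ i ∈ Finset.range k, ‖p (i + 1) - p i‖ ≤ (1 / Real.cos (γ / 2)) * ‖p k - p 0‖ := by
  obtain ⟨d, hd, hedge⟩ := h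
  have hcos : 0 < Real.cos (γ / 2) := cos_pos_of_mem_Ioo ⟨by linarith [pi_pos], by linarith⟩
  rw [one_div_mul_eq_div, le_div_iff₀ hcos]
  refine sum_norm_sub_mul_le_norm_sub hd.le p k fun i hi => ?_
  rw [← dot2_eq_inner]
  exact hedge i hi
end
end

section
/- Suppose every set of m points in general position in the plane contains a subset of at least c·log₂ m points in convex position (with c > 0 a fixed constant, m ≥ 2). Then every set of n ≥ 2 points in general position can be partitioned into at most ⌈2n / (c·log₂ n)⌉ + 1 subsets, each of which is in convex position. -/
open Real

/-- A finite planar point set is in general position if no three distinct points are collinear. -/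
def GenPos (S : Finset ℂ) : Prop :=
  ∀ p ∈ S, ∀ q ∈ S, ∀ r ∈ S, p ≠ q → p ≠ r → q ≠ r → ¬ Collinear ℝ ({p, q, r} : Set ℂ)

/-- A finite point set is in convex position if every point is a vertex of its convex hull. -/
def ConvexPos (T : Finset ℂ) : Prop :=
  ∀ p ∈ T, p ∉ convexHull ℝ ((T.erase p : Finset ℂ) : Set ℂ)

/-!
Repeatedly extract a convex subset of size at least `c log₂ n`. With `f n = 2n / (c log₂ n)`,
removing `t ≥ c log₂ n` points from `n = r + t` lowers `f` by at least one as long as `r ≥ 5`: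
after clearing denominators this is `2r log (r + t) ≤ (2r + t) log r`. Once fewer than five points
remain they split into two pairs, and pairs are trivially in convex position; pairs also suffice
from the start when `c log₂ n ≤ 2`, since then `f n ≥ n`.
-/

open Finset

lemma two_mul_log_add_three_le {r : ℕ} (hr : 5 ≤ r) :
    2 * r * log (r + 3) ≤ (2 * r + 3) * log r := by
  rcases le_or_gt 8 r with hr8 | hr8
  · have hr0 : (0 : ℝ) < r := by positivity
    have hstep : log (r + 3) ≤ log r + 3 / r := by
      have h := log_le_sub_one_of_pos (x := (r + 3) / r) (by positivity)
      rw [log_div (by positivity) hr0.ne', add_div, div_self hr0.ne'] at h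
      linarith
    have hlog : 2 < log r := by
      have h8 : log 8 ≤ log r := log_le_log (by norm_num) (by exact_mod_cast hr8)
      have : log 8 = 3 * log 2 := by
        rw [show (8 : ℝ) = 2 ^ 3 by norm_num, log_pow]; norm_num
      linarith [log_two_gt_d9]
    calc 2 * r * log (r + 3) ≤ 2 * r * (log r + 3 / r) := by gcongr
      _ = 2 * r * log r + 6 := by field_simp; ring
      _ ≤ (2 * r + 3) * log r := by linarith
  · have hpow : ((r : ℝ) + 3) ^ (2 * r) ≤ (r : ℝ) ^ (2 * r + 3) := by
      interval_cases r <;> norm_num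
    have := log_le_log (by positivity) hpow
    rw [log_pow, log_pow] at this
    push_cast at this
    linarith

lemma two_mul_log_add_le {r : ℕ} (hr : 5 ≤ r) {t : ℝ} (ht : 3 ≤ t) :
    2 * r * log (r + t) ≤ (2 * r + t) * log r := by
  have hr0 : (0 : ℝ) < r := by positivity
  -- concavity of `log`: tangent line at `r + 3`, whose slope `1 / (r + 3)` is at most the
  -- secant slope on `[r, r + 3]`, which the case `t = 3` bounds by `log r / (2 * r)`
  have htangent : log (r + t) ≤ log (r + 3) + (t - 3) / (r + 3) := by
    have h := log_le_sub_one_of_pos (x := (r + t) / (r + 3)) (by positivity)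
    rw [log_div (by positivity) (by positivity)] at h
    have : ((r : ℝ) + t) / (r + 3) - 1 = (t - 3) / (r + 3) := by field_simp; ring
    linarith
  have hslope : 2 * r / (r + 3) ≤ log r := by
    have h := one_sub_inv_le_log_of_pos (x := (r + 3) / r) (by positivity)
    rw [log_div (by positivity) hr0.ne', inv_div] at h
    have hsecant : 3 / (r + 3) ≤ log (r + 3) - log r := by
      have : 1 - (r : ℝ) / (r + 3) = 3 / (r + 3) := by field_simp; ring
      linarith
    have := mul_le_mul_of_nonneg_left hsecant (by positivity : (0 : ℝ) ≤ 2 * r)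
    have : 2 * r * (3 / (r + 3)) = 3 * (2 * r / (r + 3) : ℝ) := by ring
    linarith [two_mul_log_add_three_le hr]
  calc 2 * r * log (r + t) ≤ 2 * r * (log (r + 3) + (t - 3) / (r + 3)) := by gcongr
    _ = 2 * r * log (r + 3) + (t - 3) * (2 * r / (r + 3)) := by ring
    _ ≤ (2 * r + 3) * log r + (t - 3) * log r := by
      gcongr ?_ + ?_
      · exact two_mul_log_add_three_le hr
      · exact mul_le_mul_of_nonneg_left hslope (by linarith)
    _ = (2 * r + t) * log r := by ring

noncomputable def convexPartitionBound (c : ℝ) (n : ℕ) : ℝ := 2 * n / (c * logb 2 n)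

section convexPartitionBound

variable {c : ℝ} (hc : 0 < c)
include hc

lemma convexPartitionBound_nonneg (n : ℕ) : 0 ≤ convexPartitionBound c n := by
  have := hc.le
  unfold convexPartitionBound logb
  positivity

lemma le_convexPartitionBound {n : ℕ} (hn : 2 ≤ n) (h : c * logb 2 n ≤ 2) :
    n ≤ convexPartitionBound c n := by
  have : 0 < logb 2 (n : ℝ) := logb_pos one_lt_two (by exact_mod_cast hn)
  rw [convexPartitionBound, le_div_iff₀ (by positivity)]
  nlinarith

lemma two_le_convexPartitionBound {n : ℕ} (hn : 2 ≤ n) (h : c * logb 2 n ≤ n) :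
    2 ≤ convexPartitionBound c n := by
  have : 0 < logb 2 (n : ℝ) := logb_pos one_lt_two (by exact_mod_cast hn)
  rw [convexPartitionBound, le_div_iff₀ (by positivity)]
  linarith

lemma convexPartitionBound_add_one_le {r t : ℕ} (hr : 5 ≤ r) (ht : 3 ≤ t)
    (h : c * logb 2 (r + t : ℕ) ≤ t) :
    convexPartitionBound c r + 1 ≤ convexPartitionBound c (r + t) := by
  have hr' : (5 : ℝ) ≤ r := by exact_mod_cast hr
  have ht' : (3 : ℝ) ≤ t := by exact_mod_cast ht
  simp only [convexPartitionBound]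
  push_cast at h ⊢
  have hA : 0 < logb 2 (r : ℝ) := logb_pos one_lt_two (by linarith)
  have hB : 0 < logb 2 ((r : ℝ) + t) := logb_pos one_lt_two (by linarith)
  have hkey : 2 * r * logb 2 (r + t) ≤ (2 * r + t) * logb 2 r := by
    simp only [logb, ← mul_div_assoc]
    exact div_le_div_of_nonneg_right (two_mul_log_add_le hr ht') (log_nonneg one_le_two)
  have h1 : 2 * r / (c * logb 2 r) ≤ (2 * r + t) / (c * logb 2 (r + t)) := by
    rw [div_le_div_iff₀ (by positivity) (by positivity)]
    nlinarith
  have h2 : 1 ≤ t / (c * logb 2 (r + t)) := by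
    rw [le_div_iff₀ (by positivity)]
    linarith
  calc 2 * r / (c * logb 2 r) + 1
      ≤ (2 * r + t) / (c * logb 2 (r + t)) + t / (c * logb 2 (r + t)) := by gcongr
    _ = 2 * (r + t) / (c * logb 2 (r + t)) := by ring

end convexPartitionBound

lemma GenPos.mono {S T : Finset ℂ} (h : T ⊆ S) (hS : GenPos S) : GenPos T :=
  fun p hp q hq r hr ↦ hS p (h hp) q (h hq) r (h hr)

lemma convexPos_of_card_le_two {T : Finset ℂ} (hT : #T ≤ 2) : ConvexPos T := by
  intro p hp
  have : ((T.erase p : Finset ℂ) : Set ℂ).Subsingleton := by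
    rw [← card_le_one_iff_subsingleton, card_erase_of_mem hp]
    omega
  rw [this.convex.convexHull_eq]
  exact notMem_erase p T

lemma exists_finpartition_card_le_two {α : Type*} [DecidableEq α] (s : Finset α) :
    ∃ P : Finpartition s, (∀ t ∈ P.parts, #t ≤ 2) ∧ #P.parts = #s % 2 + #s / 2 :=
  have h : #s % 2 * 1 + #s / 2 * (1 + 1) = #s := by omega
  ⟨(⊥ : Finpartition s).equitabilise h,
    fun _ ht ↦ by rcases Finpartition.card_eq_of_mem_parts_equitabilise ht with h | h <;> omega,
    Finpartition.card_parts_equitabilise _ _ one_ne_zero⟩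

lemma exists_convexPos_finpartition_card_le_half (S : Finset ℂ) :
    ∃ P : Finpartition S, (∀ T ∈ P.parts, ConvexPos T) ∧ #P.parts ≤ (#S + 1) / 2 := by
  obtain ⟨P, hP, hcard⟩ := exists_finpartition_card_le_two S
  exact ⟨P, fun T hT ↦ convexPos_of_card_le_two (hP T hT), by omega⟩

theorem exists_convexPos_finpartition {c : ℝ} (hc : 0 < c)
    (hES : ∀ M : Finset ℂ, 2 ≤ #M → GenPos M → ∃ T ⊆ M, c * logb 2 #M ≤ #T ∧ ConvexPos T)
    {S : Finset ℂ} (hS : 2 ≤ #S) (hgen : GenPos S) :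
    ∃ P : Finpartition S, (∀ T ∈ P.parts, ConvexPos T) ∧
      #P.parts ≤ ⌊convexPartitionBound c #S⌋₊ + 1 := by
  induction S using Finset.strongInduction with
  | H S ih =>
  by_cases hsmall : c * logb 2 #S ≤ 2
  · obtain ⟨P, hconv, hcard⟩ := exists_convexPos_finpartition_card_le_half S
    have := Nat.le_floor (le_convexPartitionBound hc hS hsmall)
    exact ⟨P, hconv, by omega⟩
  obtain ⟨T, hTS, hTcard, hTconv⟩ := hES S hS hgen
  have hT : 3 ≤ #T := by
    have : (2 : ℝ) < #T := by linarith
    exact_mod_cast this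
  have hT0 : T.Nonempty := card_pos.mp (by omega)
  have hcard : #(S \ T) + #T = #S := card_sdiff_add_card_eq_card hTS
  obtain ⟨Q, hQconv, hQcard⟩ : ∃ Q : Finpartition (S \ T), (∀ U ∈ Q.parts, ConvexPos U) ∧
      #Q.parts + 1 ≤ ⌊convexPartitionBound c #S⌋₊ + 1 := by
    by_cases hR : 5 ≤ #(S \ T)
    · obtain ⟨Q, hQconv, hQcard⟩ :=
        ih _ (sdiff_ssubset hTS hT0) (by omega) (hgen.mono sdiff_subset)
      have hbound := convexPartitionBound_add_one_le hc hR hT (by rwa [hcard])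
      rw [hcard] at hbound
      have := Nat.floor_mono hbound
      rw [Nat.floor_add_one (convexPartitionBound_nonneg hc _)] at this
      exact ⟨Q, hQconv, by omega⟩
    · obtain ⟨Q, hQconv, hQcard⟩ := exists_convexPos_finpartition_card_le_half (S \ T)
      have := Nat.le_floor (two_le_convexPartitionBound hc hS
        (hTcard.trans (by exact_mod_cast card_le_card hTS)))
      exact ⟨Q, hQconv, by push_cast at this; omega⟩
  refine ⟨Q.extend hT0.ne_empty disjoint_sdiff_self_left (sdiff_union_of_subset hTS), ?_, ?_⟩
  · simpa [forall_mem_insert] using ⟨hTconv, hQconv⟩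
  · rwa [Finpartition.card_extend]

/-- If every `m`-point set in general position contains `c·log₂ m` points
in convex position, then every `n`-point set in general position (`n ≥ 2`) can be
partitioned into at most `⌈2n/(c·log₂ n)⌉ + 1` convex-position subsets. -/
theorem urabe_partition (c : ℝ) (hc : 0 < c)
    (hES : ∀ M : Finset ℂ, 2 ≤ M.card → GenPos M →
      ∃ T ⊆ M, c * Real.logb 2 M.card ≤ T.card ∧ ConvexPos T) :
    ∀ S : Finset ℂ, 2 ≤ S.card → GenPos S →
      ∃ Part : Finset (Finset ℂ),
        (∀ T ∈ Part, T ⊆ S ∧ ConvexPos T) ∧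
        (Part : Set (Finset ℂ)).PairwiseDisjoint id ∧
        Part.biUnion id = S ∧
        Part.card ≤ ⌈(2 * S.card : ℝ) / (c * Real.logb 2 S.card)⌉₊ + 1 := by
  intro S hS hgen
  obtain ⟨P, hconv, hcard⟩ := exists_convexPos_finpartition hc hES hS hgen
  exact ⟨P.parts, fun T hT ↦ ⟨P.le hT, hconv T hT⟩, P.disjoint, P.biUnion_parts,
    hcard.trans (Nat.add_le_add_right (Nat.floor_le_ceil _) 1)⟩
end

section
/- Let G be the 3-sweep graph of a finite planar point set S with respect to an acute triangle with angles θ_a, θ_b, θ_c. Let q, t ∈ S with t in the wedge W_{q,a}. If t lies to the left of the extended a-path of q, then there is a path in G from q to t all of whose edge vectors lie in a common closed wedge of width θ_a + θ_b; moreover the path consists of a prefix of the a-path of q followed by a reversed prefix of the b-path of t. -/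
/-! In the oblique coordinates `x = cross2 (B - A)`, `y = cross2 (C - A)` the `a`-wedge of `q` is
the quadrant `x ≤ x q, y ≥ y q` and the `b`-wedge is `x ≤ x q, height ≤ height q`, where
`height = y - x` is proportional to the vertical coordinate; the `a`-neighbour is the lowest point
of the `a`-wedge and the `b`-neighbour the point of the `b`-wedge with largest `y`.

If a point `p` lies left of the extended `a`-path, some vertex `v j` lies in the `b`-wedge of `p`,
and every vertex not above `p` comes no later than `v j`. The `b`-neighbour `r` of `p` therefore
has `y` at least that of all vertices not above it. Were `r` right of the `a`-path, it would lie in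
the `a`-wedge of a vertex `v l` while being strictly lower than `v (l + 1)`, contradicting the
choice of `v (l + 1)` unless `r = v l`. So the `b`-path of `t` stays left of the `a`-path until it
meets it, and it cannot end while left of it. -/

open Real

noncomputable section

/-- The cross product (signed area) of two plane vectors. -/
def cross2 (u v : ℂ) : ℝ := u.re * v.im - u.im * v.re

/-- Counterclockwise rotation of a plane vector by `90°`. -/
def perp2 (u : ℂ) : ℂ := Complex.I * u

/-- Membership in the closed wedge with apex `q` spanned by the directions `X` and `Y`. -/
def InWedge (X Y q p : ℂ) : Prop :=
  ∃ s u : ℝ, 0 ≤ s ∧ 0 ≤ u ∧ p - q = s • X + u • Y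

/-- `p` is a sweep-nearest neighbor of `q` in the wedge spanned by `X` and `Y`. -/
def IsSweepNbr (X Y : ℂ) (S : Finset ℂ) (q p : ℂ) : Prop :=
  p ∈ S ∧ p ≠ q ∧ InWedge X Y q p ∧
    ∀ r ∈ S, r ≠ q → InWedge X Y q r →
      |dot2 (perp2 (X - Y)) (p - q)| ≤ |dot2 (perp2 (X - Y)) (r - q)|

theorem dot2_perp2 (w u : ℂ) : dot2 (perp2 w) u = cross2 w u := by
  simp only [dot2, perp2, cross2, Complex.mul_re, Complex.mul_im, Complex.I_re, Complex.I_im]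
  ring

theorem cross2_sub_right (w a b : ℂ) : cross2 w (a - b) = cross2 w a - cross2 w b := by
  simp only [cross2, Complex.sub_re, Complex.sub_im]
  ring

-- Cramer's rule in the basis `X, Y`.
theorem cross2_smul_eq_add (X Y z : ℂ) :
    cross2 Y X • z = cross2 Y z • X + (-cross2 X z) • Y := by
  apply Complex.ext <;>
    simp only [cross2, Complex.add_re, Complex.add_im, Complex.real_smul, Complex.mul_re,
      Complex.mul_im, Complex.ofReal_re, Complex.ofReal_im] <;> ring

theorem eq_of_cross2_eq {X Y p q : ℂ} (h : cross2 Y X ≠ 0) (hX : cross2 X p = cross2 X q)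
    (hY : cross2 Y p = cross2 Y q) : p = q := by
  have hz := cross2_smul_eq_add X Y (p - q)
  rw [cross2_sub_right, cross2_sub_right, hX, hY] at hz
  simp only [sub_self, neg_zero, zero_smul, add_zero] at hz
  exact sub_eq_zero.1 ((smul_eq_zero.1 hz).resolve_left h)

theorem inWedge_comm {X Y q p : ℂ} : InWedge X Y q p ↔ InWedge Y X q p := by
  constructor <;> rintro ⟨s, u, hs, hu, h⟩ <;> exact ⟨u, s, hu, hs, h.trans (add_comm _ _)⟩

theorem inWedge_iff {X Y q p : ℂ} (h : 0 < cross2 Y X) :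
    InWedge X Y q p ↔ cross2 X p ≤ cross2 X q ∧ cross2 Y q ≤ cross2 Y p := by
  constructor
  · rintro ⟨s, u, hs, hu, hpq⟩
    have hp : p = q + s • X + u • Y := by rw [add_assoc, ← hpq]; ring
    subst hp
    simp only [cross2, Complex.add_re, Complex.add_im, Complex.real_smul, Complex.mul_re,
      Complex.mul_im, Complex.ofReal_re, Complex.ofReal_im] at h ⊢
    constructor <;> nlinarith
  · rintro ⟨hX, hY⟩
    have hX' : 0 ≤ -cross2 X (p - q) := by rw [cross2_sub_right]; linarith
    have hY' : 0 ≤ cross2 Y (p - q) := by rw [cross2_sub_right]; linarith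
    refine ⟨cross2 Y (p - q) / cross2 Y X, -cross2 X (p - q) / cross2 Y X,
      div_nonneg hY' h.le, div_nonneg hX' h.le, ?_⟩
    rw [div_eq_inv_mul, div_eq_inv_mul, mul_smul, mul_smul, ← smul_add,
      ← cross2_smul_eq_add, inv_smul_smul₀ h.ne']

theorem exists_isSweepNbr {X Y q r : ℂ} {S : Finset ℂ} (hr : r ∈ S) (hrq : r ≠ q)
    (hw : InWedge X Y q r) : ∃ p, IsSweepNbr X Y S q p := by
  classical
  obtain ⟨p, hp, hmin⟩ := (S.filter fun r => r ≠ q ∧ InWedge X Y q r).exists_min_image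
    (fun r => |dot2 (perp2 (X - Y)) (r - q)|) ⟨r, Finset.mem_filter.2 ⟨hr, hrq, hw⟩⟩
  obtain ⟨hpS, hpq, hpw⟩ := Finset.mem_filter.1 hp
  exact ⟨p, hpS, hpq, hpw, fun r hr hrq hrw => hmin r (Finset.mem_filter.2 ⟨hr, hrq, hrw⟩)⟩

theorem eq_of_forall_not_isSweepNbr {X Y q r : ℂ} {S : Finset ℂ}
    (hmax : ∀ p, ¬IsSweepNbr X Y S q p) (hr : r ∈ S) (hw : InWedge X Y q r) : r = q := by
  by_contra hrq
  obtain ⟨p, hp⟩ := exists_isSweepNbr hr hrq hw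
  exact hmax p hp

theorem exists_le_lt_succ_of_le_of_lt {α : Type*} [LinearOrder α] {f : ℕ → α} {a : α} {N : ℕ}
    (h0 : f 0 ≤ a) (hN : a < f N) : ∃ l < N, f l ≤ a ∧ a < f (l + 1) := by
  induction N with
  | zero => exact absurd hN h0.not_gt
  | succ N ih =>
    by_cases hN' : a < f N
    · obtain ⟨l, hl, hla⟩ := ih hN'
      exact ⟨l, hl.trans N.lt_succ_self, hla⟩
    · exact ⟨N, N.lt_succ_self, not_lt.1 hN', hN⟩

structure ObliqueCoords (P : Type*) where
  x : P → ℝ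
  y : P → ℝ
  injective : ∀ p q, x p = x q → y p = y q → p = q

namespace ObliqueCoords

variable {P : Type*} (c : ObliqueCoords P)

def height (p : P) : ℝ := c.y p - c.x p

def InAWedge (q p : P) : Prop := c.x p ≤ c.x q ∧ c.y q ≤ c.y p

def InBWedge (q p : P) : Prop := c.height p ≤ c.height q ∧ c.x p ≤ c.x q

def IsANbr (S : Finset P) (q p : P) : Prop :=
  p ∈ S ∧ p ≠ q ∧ c.InAWedge q p ∧
    ∀ r ∈ S, r ≠ q → c.InAWedge q r → c.height p ≤ c.height r

def IsBNbr (S : Finset P) (q p : P) : Prop :=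
  p ∈ S ∧ p ≠ q ∧ c.InBWedge q p ∧ ∀ r ∈ S, r ≠ q → c.InBWedge q r → c.y r ≤ c.y p

def IsAPath (S : Finset P) (v : ℕ → P) (k : ℕ) : Prop := ∀ l < k, c.IsANbr S (v l) (v (l + 1))

def IsBPath (S : Finset P) (w : ℕ → P) (k : ℕ) : Prop := ∀ l < k, c.IsBNbr S (w l) (w (l + 1))

/-- Positive when `p` lies left of the line from `a` to `b`; the factors are in this order because
the coordinates of `ofTriangle` reverse orientation. -/
def signedArea (a b p : P) : ℝ :=
  (c.y b - c.y a) * (c.x p - c.x a) - (c.x b - c.x a) * (c.y p - c.y a)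

/-- `p` lies strictly left of the extended path `v 0, …, v k`: left of an edge within the height
range of that edge, or left of the boundary ray of the empty wedge at `v k`, along which `x` is
constant. -/
def LeftOfPath (v : ℕ → P) (k : ℕ) (p : P) : Prop :=
  (∃ l < k, c.height (v l) ≤ c.height p ∧ c.height p ≤ c.height (v (l + 1)) ∧
      0 < c.signedArea (v l) (v (l + 1)) p) ∨
    (c.height (v k) ≤ c.height p ∧ c.x (v k) < c.x p)

variable {c}

theorem signedArea_left_self (a b : P) : c.signedArea a b a = 0 := by
  simp [signedArea]

theorem signedArea_of_height_eq {a b p : P} (h : c.height p = c.height b) :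
    c.signedArea a b p = (c.height b - c.height a) * (c.x p - c.x b) := by
  unfold height at h
  unfold signedArea height
  linear_combination (c.x a - c.x b) * h

theorem x_le_of_signedArea_nonpos {a b p : P} (hA : c.signedArea a b p ≤ 0)
    (hab : c.InAWedge a b) (hlt : c.height a < c.height b) (hp : c.height a ≤ c.height p) :
    c.x p ≤ c.x a := by
  unfold signedArea at hA
  unfold height at hlt hp
  obtain ⟨hx, -⟩ := hab
  nlinarith

theorem y_lt_of_signedArea_pos {a b p : P} (hA : 0 < c.signedArea a b p)
    (hab : c.InAWedge a b) (hp : c.x p < c.x a) : c.y a < c.y p := by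
  unfold signedArea at hA
  obtain ⟨hx, hy⟩ := hab
  nlinarith

variable {S : Finset P} {v w : ℕ → P} {k k' : ℕ}

namespace IsAPath

theorem mem (hv : c.IsAPath S v k) (h0 : v 0 ∈ S) : ∀ i ≤ k, v i ∈ S
  | 0, _ => h0
  | i + 1, hi => (hv i hi).1

theorem monotoneOn_y (hv : c.IsAPath S v k) : MonotoneOn (fun i => c.y (v i)) (Set.Iic k) :=
  monotoneOn_of_le_add_one Set.ordConnected_Iic fun l _ _ hl => (hv l hl).2.2.1.2

theorem height_lt_succ (hv : c.IsAPath S v k) {l : ℕ} (hl : l < k) :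
    c.height (v l) < c.height (v (l + 1)) := by
  obtain ⟨-, hne, ⟨hx, hy⟩, -⟩ := hv l hl
  unfold height
  refine lt_of_le_of_ne (by linarith) fun heq => hne (c.injective _ _ ?_ ?_) <;> linarith

theorem strictMonoOn_height (hv : c.IsAPath S v k) :
    StrictMonoOn (fun i => c.height (v i)) (Set.Iic k) :=
  strictMonoOn_of_lt_add_one Set.ordConnected_Iic fun _ _ _ hl => hv.height_lt_succ hl

theorem exists_inBWedge_of_leftOfPath (hv : c.IsAPath S v k) {p : P} (hp : p ∈ S)
    (hleft : c.LeftOfPath v k p) :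
    ∃ j ≤ k, v j ≠ p ∧ c.InBWedge p (v j) ∧
      ∀ i ≤ k, c.height (v i) ≤ c.height p → i ≤ j := by
  have hmono := hv.strictMonoOn_height
  rcases hleft with ⟨l, hl, hlow, hhigh, harea⟩ | ⟨htop, hx⟩
  · rcases hhigh.lt_or_eq with hlt | heq
    · -- `p` cannot lie in the `a`-wedge of `v l`, being strictly below `v (l + 1)`
      have hx : c.x (v l) ≤ c.x p := by
        by_contra! hx
        have hy := y_lt_of_signedArea_pos harea (hv l hl).2.2.1 hx
        exact hlt.not_ge ((hv l hl).2.2.2 p hp (ne_of_apply_ne c.x hx.ne) ⟨hx.le, hy.le⟩)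
      refine ⟨l, hl.le, fun h => ?_, ⟨hlow, hx⟩, fun i hi hip => ?_⟩
      · rw [h, signedArea_left_self] at harea
        exact harea.false
      · exact Nat.le_of_lt_succ ((hmono.lt_iff_lt hi hl).1 (hip.trans_lt hlt))
    · have hx : c.x (v (l + 1)) < c.x p := by
        rw [signedArea_of_height_eq heq] at harea
        exact sub_pos.1 (pos_of_mul_pos_right harea (sub_pos.2 (hv.height_lt_succ hl)).le)
      exact ⟨l + 1, hl, ne_of_apply_ne c.x hx.ne, ⟨heq.ge, hx.le⟩,
        fun i hi hip => (hmono.le_iff_le hi hl).1 (hip.trans heq.le)⟩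
  · exact ⟨k, le_rfl, ne_of_apply_ne c.x hx.ne, ⟨htop, hx.le⟩, fun _ hi _ => hi⟩

theorem eq_or_leftOfPath (hv : c.IsAPath S v k) (hend : ∀ r ∈ S, c.InAWedge (v k) r → r = v k)
    {r : P} (hr : r ∈ S) (hx0 : c.x r ≤ c.x (v 0)) (hy0 : c.y (v 0) ≤ c.y r)
    (hy : ∀ i ≤ k, c.height (v i) ≤ c.height r → c.y (v i) ≤ c.y r) :
    (∃ i ≤ k, r = v i) ∨ c.LeftOfPath v k r := by
  by_cases htop : c.height (v k) ≤ c.height r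
  · by_cases hxk : c.x (v k) < c.x r
    · exact Or.inr (Or.inr ⟨htop, hxk⟩)
    · exact Or.inl ⟨k, le_rfl, hend r hr ⟨not_lt.1 hxk, hy k le_rfl htop⟩⟩
  have h0 : c.height (v 0) ≤ c.height r := by unfold height; linarith
  obtain ⟨l, hl, hlow, hhigh⟩ :=
    exists_le_lt_succ_of_le_of_lt (f := fun i => c.height (v i)) h0 (not_le.1 htop)
  by_cases harea : 0 < c.signedArea (v l) (v (l + 1)) r
  · exact Or.inr (Or.inl ⟨l, hl, hlow, hhigh.le, harea⟩)
  -- otherwise `r` lies in the `a`-wedge of `v l` but strictly below its `a`-neighbour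
  have hx := x_le_of_signedArea_nonpos (not_lt.1 harea) (hv l hl).2.2.1 (hv.height_lt_succ hl) hlow
  refine Or.inl ⟨l, hl.le, by_contra fun hne => ?_⟩
  exact hhigh.not_ge ((hv l hl).2.2.2 r hr hne ⟨hx, hy l hl.le hlow⟩)

theorem eq_or_leftOfPath_of_isBNbr (hv : c.IsAPath S v k) (hv0 : v 0 ∈ S)
    (hend : ∀ r ∈ S, c.InAWedge (v k) r → r = v k) {p r : P} (hp : p ∈ S)
    (hx0 : c.x p ≤ c.x (v 0)) (hleft : c.LeftOfPath v k p) (hpr : c.IsBNbr S p r) :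
    (∃ i ≤ k, r = v i) ∨ (c.LeftOfPath v k r ∧ c.x r ≤ c.x (v 0)) := by
  obtain ⟨hrS, -, ⟨hrh, hrx⟩, hmax⟩ := hpr
  obtain ⟨j, hj, hne, hjB, hbelow⟩ := hv.exists_inBWedge_of_leftOfPath hp hleft
  have hyj : c.y (v j) ≤ c.y r := hmax (v j) (hv.mem hv0 j hj) hne hjB
  have hxr : c.x r ≤ c.x (v 0) := hrx.trans hx0
  refine (hv.eq_or_leftOfPath hend hrS hxr ?_ ?_).imp_right (⟨·, hxr⟩)
  · exact (hv.monotoneOn_y (Nat.zero_le k) hj (Nat.zero_le j)).trans hyj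
  · exact fun i hi hir => (hv.monotoneOn_y hi hj (hbelow i hi (hir.trans hrh))).trans hyj

theorem exists_eq_of_isBPath (hv : c.IsAPath S v k) (hv0 : v 0 ∈ S)
    (hvend : ∀ r ∈ S, c.InAWedge (v k) r → r = v k) (hw : c.IsBPath S w k') (hw0 : w 0 ∈ S)
    (hwend : ∀ r ∈ S, c.InBWedge (w k') r → r = w k') (hx0 : c.x (w 0) ≤ c.x (v 0))
    (hleft : c.LeftOfPath v k (w 0)) :
    ∃ i ≤ k, ∃ j ≤ k', v i = w j := by
  have hinv : ∀ j ≤ k', (∃ j' ≤ j, ∃ i ≤ k, v i = w j') ∨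
      (w j ∈ S ∧ c.x (w j) ≤ c.x (v 0) ∧ c.LeftOfPath v k (w j)) := by
    intro j hj
    induction j with
    | zero => exact Or.inr ⟨hw0, hx0, hleft⟩
    | succ j ih =>
      rcases ih (by omega) with ⟨j', hj', hmeet⟩ | ⟨hS, hx, hl⟩
      · exact Or.inl ⟨j', by omega, hmeet⟩
      rcases hv.eq_or_leftOfPath_of_isBNbr hv0 hvend hS hx hl (hw j hj) with
        ⟨i, hi, h⟩ | ⟨hl', hx'⟩
      · exact Or.inl ⟨j + 1, le_rfl, i, hi, h.symm⟩
      · exact Or.inr ⟨(hw j hj).1, hx', hl'⟩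
  rcases hinv k' le_rfl with ⟨j, hj, hmeet⟩ | ⟨hS, -, hl⟩
  · obtain ⟨i, hi, h⟩ := hmeet
    exact ⟨i, hi, j, hj, h⟩
  · obtain ⟨j, hj, hne, hB, -⟩ := hv.exists_inBWedge_of_leftOfPath hS hl
    exact absurd (hwend _ (hv.mem hv0 j hj) hB) hne

end IsAPath

end ObliqueCoords

namespace ObliqueCoords

def ofTriangle (A B C : ℂ) (h : 0 < cross2 (C - A) (B - A)) : ObliqueCoords ℂ where
  x := cross2 (B - A)
  y := cross2 (C - A)
  injective _ _ hx hy := eq_of_cross2_eq h.ne' hx hy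

section Triangle

variable {A B C : ℂ} (h : 0 < cross2 (C - A) (B - A))

theorem height_ofTriangle (p : ℂ) : (ofTriangle A B C h).height p = cross2 (C - B) p := by
  simp only [height, ofTriangle, cross2, Complex.sub_re, Complex.sub_im]
  ring

theorem signedArea_ofTriangle (a b p : ℂ) :
    (ofTriangle A B C h).signedArea a b p = cross2 (C - A) (B - A) * cross2 (b - a) (p - a) := by
  simp only [signedArea, ofTriangle, cross2, Complex.sub_re, Complex.sub_im]
  ring

theorem inWedge_iff_inAWedge {q p : ℂ} :
    InWedge (B - A) (C - A) q p ↔ (ofTriangle A B C h).InAWedge q p :=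
  inWedge_iff h

theorem inWedge_iff_inBWedge {q p : ℂ} :
    InWedge (A - B) (C - B) q p ↔ (ofTriangle A B C h).InBWedge q p := by
  have hB : 0 < cross2 (A - B) (C - B) := by
    convert h using 1
    simp only [cross2, Complex.sub_re, Complex.sub_im]
    ring
  rw [inWedge_comm, inWedge_iff hB, InBWedge, height_ofTriangle, height_ofTriangle]
  simp only [ofTriangle, cross2, Complex.sub_re, Complex.sub_im]
  constructor <;> rintro ⟨h1, h2⟩ <;> constructor <;> linarith

theorem isANbr_of_isSweepNbr {S : Finset ℂ} {q p : ℂ} (hp : IsSweepNbr (B - A) (C - A) S q p) :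
    (ofTriangle A B C h).IsANbr S q p := by
  obtain ⟨hpS, hpq, hpW, hmin⟩ := hp
  have hdist : ∀ r, InWedge (B - A) (C - A) q r →
      |dot2 (perp2 ((B - A) - (C - A))) (r - q)| =
        (ofTriangle A B C h).height r - (ofTriangle A B C h).height q := by
    intro r hr
    obtain ⟨hx, hy⟩ := (inWedge_iff_inAWedge h).1 hr
    rw [dot2_perp2, abs_of_nonpos] <;>
      simp only [height, ofTriangle, cross2, Complex.sub_re, Complex.sub_im] at hx hy ⊢
    · ring
    · linarith
  refine ⟨hpS, hpq, (inWedge_iff_inAWedge h).1 hpW, fun r hr hrq hrW => ?_⟩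
  have hrW' := (inWedge_iff_inAWedge h).2 hrW
  have := hmin r hr hrq hrW'
  rw [hdist p hpW, hdist r hrW'] at this
  linarith

theorem isBNbr_of_isSweepNbr {S : Finset ℂ} {q p : ℂ} (hp : IsSweepNbr (A - B) (C - B) S q p) :
    (ofTriangle A B C h).IsBNbr S q p := by
  obtain ⟨hpS, hpq, hpW, hmin⟩ := hp
  have hdist : ∀ r, InWedge (A - B) (C - B) q r →
      |dot2 (perp2 ((A - B) - (C - B))) (r - q)| =
        (ofTriangle A B C h).y q - (ofTriangle A B C h).y r := by
    intro r hr
    obtain ⟨hh, hx⟩ := (inWedge_iff_inBWedge h).1 hr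
    rw [dot2_perp2, abs_of_nonneg] <;>
      simp only [height, ofTriangle, cross2, Complex.sub_re, Complex.sub_im] at hh hx ⊢
    · ring
    · linarith
  refine ⟨hpS, hpq, (inWedge_iff_inBWedge h).1 hpW, fun r hr hrq hrW => ?_⟩
  have hrW' := (inWedge_iff_inBWedge h).2 hrW
  have := hmin r hr hrq hrW'
  rw [hdist p hpW, hdist r hrW'] at this
  linarith

theorem leftOfPath_ofTriangle (hBC : B.im = C.im) (hBleft : B.re < C.re) {v : ℕ → ℂ} {k : ℕ}
    {t : ℂ} (hleft : (∃ l < k, (v l).im ≤ t.im ∧ t.im ≤ (v (l + 1)).im ∧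
        0 < cross2 (v (l + 1) - v l) (t - v l)) ∨
      ((v k).im ≤ t.im ∧ 0 < cross2 (B - A) (t - v k))) :
    (ofTriangle A B C h).LeftOfPath v k t := by
  have hheight : ∀ p q : ℂ, p.im ≤ q.im →
      (ofTriangle A B C h).height p ≤ (ofTriangle A B C h).height q := by
    intro p q hpq
    simp only [height_ofTriangle, cross2, Complex.sub_re, Complex.sub_im, hBC, sub_self,
      zero_mul, sub_zero]
    exact mul_le_mul_of_nonneg_left hpq (sub_nonneg.2 hBleft.le)
  rcases hleft with ⟨l, hl, h1, h2, h3⟩ | ⟨h1, h2⟩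
  · exact Or.inl ⟨l, hl, hheight _ _ h1, hheight _ _ h2,
      (signedArea_ofTriangle h _ _ _).symm ▸ mul_pos h h3⟩
  · rw [cross2_sub_right, sub_pos] at h2
    exact Or.inr ⟨hheight _ _ h1, h2⟩

end Triangle

end ObliqueCoords

theorem InWedge.of_aWedge {A B C q p : ℂ} (h : InWedge (B - A) (C - A) q p) :
    InWedge (C - A) (B - C) q p := by
  obtain ⟨s, u, hs, hu, hpq⟩ := h
  exact ⟨s + u, s, add_nonneg hs hu, hs, by rw [hpq]; module⟩

theorem InWedge.symm_of_bWedge {A B C q p : ℂ} (h : InWedge (A - B) (C - B) q p) :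
    InWedge (C - A) (B - C) p q := by
  obtain ⟨s, u, hs, hu, hpq⟩ := h
  exact ⟨s, s + u, hs, add_nonneg hs hu, by
    rw [show q - p = -(p - q) by ring, hpq]; module⟩

theorem cross2_pos_of_triangle {A B C : ℂ} (hBC : B.im = C.im) (hAbelow : A.im < B.im)
    (hBleft : B.re < C.re) : 0 < cross2 (C - A) (B - A) := by
  have e : cross2 (C - A) (B - A) = (B.im - A.im) * (C.re - B.re) := by
    simp only [cross2, Complex.sub_re, Complex.sub_im, hBC]
    ring
  rw [e]
  exact mul_pos (sub_pos.2 hAbelow) (sub_pos.2 hBleft)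

theorem sweep_graph_angle_monotone_path_general (A B C : ℂ)
    (hBC : B.im = C.im) (hAbelow : A.im < B.im) (hBleft : B.re < C.re)
    (S : Finset ℂ) (q t : ℂ) (hqS : q ∈ S) (htS : t ∈ S)
    (htW : InWedge (B - A) (C - A) q t)
    (k : ℕ) (v : ℕ → ℂ) (hv0 : v 0 = q)
    (hvstep : ∀ l < k, IsSweepNbr (B - A) (C - A) S (v l) (v (l + 1)))
    (hvmax : ∀ p : ℂ, ¬ IsSweepNbr (B - A) (C - A) S (v k) p)
    (k' : ℕ) (w : ℕ → ℂ) (hw0 : w 0 = t)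
    (hwstep : ∀ l < k', IsSweepNbr (A - B) (C - B) S (w l) (w (l + 1)))
    (hwmax : ∀ p : ℂ, ¬ IsSweepNbr (A - B) (C - B) S (w k') p)
    (hleft : (∃ l < k, (v l).im ≤ t.im ∧ t.im ≤ (v (l + 1)).im ∧
        0 < cross2 (v (l + 1) - v l) (t - v l)) ∨
      ((v k).im ≤ t.im ∧ 0 < cross2 (B - A) (t - v k))) :
    ∃ i ≤ k, ∃ j ≤ k', v i = w j ∧
      (∀ l < i, ∃ s u : ℝ, 0 ≤ s ∧ 0 ≤ u ∧ v (l + 1) - v l = s • (C - A) + u • (B - C)) ∧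
      (∀ l < j, ∃ s u : ℝ, 0 ≤ s ∧ 0 ≤ u ∧ w l - w (l + 1) = s • (C - A) + u • (B - C)) := by
  subst hv0 hw0
  have h := cross2_pos_of_triangle hBC hAbelow hBleft
  open ObliqueCoords in
  obtain ⟨i, hi, j, hj, hij⟩ := IsAPath.exists_eq_of_isBPath
    (fun l hl => isANbr_of_isSweepNbr h (hvstep l hl)) hqS
    (fun r hr hrW => eq_of_forall_not_isSweepNbr hvmax hr ((inWedge_iff_inAWedge h).2 hrW))
    (fun l hl => isBNbr_of_isSweepNbr h (hwstep l hl)) htS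
    (fun r hr hrW => eq_of_forall_not_isSweepNbr hwmax hr ((inWedge_iff_inBWedge h).2 hrW))
    ((inWedge_iff_inAWedge h).1 htW).1 (leftOfPath_ofTriangle h hBC hBleft hleft)
  exact ⟨i, hi, j, hj, hij, fun l hl => (hvstep l (hl.trans_le hi)).2.2.1.of_aWedge,
    fun l hl => (hwstep l (hl.trans_le hj)).2.2.1.symm_of_bWedge⟩

/-- Setting: an acute triangle `A B C` with `BC` horizontal, `A` below
`BC` and `B` to the left of `C` (the clockwise orientation used in the paper), a finite
point set `S`, points `q t ∈ S` with `t` in the wedge `W_{q,a}`, the maximal `a`-path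
`v 0 = q, …, v k` of `q`, and the maximal `b`-path `w 0 = t, …, w k'` of `t`.
If `t` lies (strictly) to the left of the extended `a`-path of `q`, then the two paths
meet at a common vertex `v i = w j`, so that the prefix of the `a`-path of `q` up to it,
followed by the reversed prefix of the `b`-path of `t`, is a path in `G` from `q` to `t`;
moreover all its edge vectors lie in the common closed wedge of width `θ_a + θ_b`
spanned by the directions `C - A` and `B - C`. -/
theorem sweep_graph_angle_monotone_path (A B C : ℂ)
    (hacuteA : 0 < dot2 (B - A) (C - A)) (hacuteB : 0 < dot2 (A - B) (C - B))
    (hacuteC : 0 < dot2 (A - C) (B - C))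
    (hBC : B.im = C.im) (hAbelow : A.im < B.im) (hBleft : B.re < C.re)
    (S : Finset ℂ) (q t : ℂ) (hqS : q ∈ S) (htS : t ∈ S) (hqt : t ≠ q)
    (htW : InWedge (B - A) (C - A) q t)
    (k : ℕ) (v : ℕ → ℂ) (hv0 : v 0 = q)
    (hvstep : ∀ l < k, IsSweepNbr (B - A) (C - A) S (v l) (v (l + 1)))
    (hvmax : ∀ p : ℂ, ¬ IsSweepNbr (B - A) (C - A) S (v k) p)
    (k' : ℕ) (w : ℕ → ℂ) (hw0 : w 0 = t)
    (hwstep : ∀ l < k', IsSweepNbr (A - B) (C - B) S (w l) (w (l + 1)))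
    (hwmax : ∀ p : ℂ, ¬ IsSweepNbr (A - B) (C - B) S (w k') p)
    (hleft : (∃ l < k, (v l).im ≤ t.im ∧ t.im ≤ (v (l + 1)).im ∧
        0 < cross2 (v (l + 1) - v l) (t - v l)) ∨
      ((v k).im ≤ t.im ∧ 0 < cross2 (B - A) (t - v k))) :
    ∃ i ≤ k, ∃ j ≤ k', v i = w j ∧
      (∀ l < i, ∃ s u : ℝ, 0 ≤ s ∧ 0 ≤ u ∧ v (l + 1) - v l = s • (C - A) + u • (B - C)) ∧
      (∀ l < j, ∃ s u : ℝ, 0 ≤ s ∧ 0 ≤ u ∧ w l - w (l + 1) = s • (C - A) + u • (B - C)) :=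
  sweep_graph_angle_monotone_path_general A B C hBC hAbelow hBleft S q t hqS htS htW k v hv0 hvstep
    hvmax k' w hw0 hwstep hwmax hleft
end
end

section
/- Let P = (v₁, …, v_i) be an (x,−y)-convex path (x-coordinates strictly increasing, y-coordinates strictly decreasing, turning right), with perpendicular rays ℓ_q at each v_q orthogonal to edge v_{q−1}v_q entering the region R above P, subdividing R into regions R₀, …, R_i. If w ∈ R_q and 1 ≤ t ≤ q, then the path v_t, v_{t+1}, …, v_q, w has all edge vectors lying in the closed 90° wedge bounded by the direction of ℓ_q and the direction of the line through v_{q−1}, v_q (oriented toward v_q); hence this path is angle-monotone of width 90°. -/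
/-!
The edges of the path lie in the open fourth quadrant, where `cross2 u v ≤ 0` says that `v` has
slope at most that of `u`. Right turns make the slopes decrease, so every edge `v l v (l+1)` with
`l < q` lies counterclockwise of `e = v q - v (q-1)`, and within `90°` of it because both point
into the fourth quadrant; `w` lies counterclockwise of `e` because `R` lies left of the edge
`v (q-1) v q`. Every vector of the quarter-plane spanned by `e` and `I * e` makes an angle of at
most `45°` with the unit bisector of that quarter-plane.
-/

open Real

noncomputable section

lemma cross2_swap (u v : ℂ) : cross2 u v = -cross2 v u := by
  simp only [cross2]; ring

lemma cross2_sub_sub_sub_left (a b w : ℂ) :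
    cross2 (b - a) (w - b) = cross2 (b - a) (w - a) := by
  simp only [cross2, Complex.sub_re, Complex.sub_im]; ring

lemma dot2_smul_right (u z : ℂ) (r : ℝ) : dot2 u (r • z) = r * dot2 u z := by
  simp only [dot2, Complex.smul_re, Complex.smul_im, smul_eq_mul]; ring

lemma dot2_add_I_mul_right (u e : ℂ) :
    dot2 u (e + Complex.I * e) = dot2 u e + cross2 e u := by
  simp only [dot2, cross2, Complex.add_re, Complex.add_im, Complex.mul_re, Complex.mul_im,
    Complex.I_re, Complex.I_im]; ring

lemma dot2_sq_add_cross2_sq (u e : ℂ) :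
    dot2 u e ^ 2 + cross2 e u ^ 2 = (‖u‖ * ‖e‖) ^ 2 := by
  simp only [mul_pow, Complex.sq_norm, Complex.normSq_apply, dot2, cross2]; ring

lemma norm_add_I_mul (e : ℂ) : ‖e + Complex.I * e‖ = √2 * ‖e‖ := by
  have h : ‖(1 : ℂ) + Complex.I‖ = √2 := by
    simpa [one_add_one_eq_two] using Complex.norm_add_mul_I 1 1
  rw [← one_add_mul, norm_mul, h]

lemma dot2_nonneg_of_re_nonneg_of_im_nonpos {u v : ℂ} (hu : 0 ≤ u.re) (hu' : u.im ≤ 0)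
    (hv : 0 ≤ v.re) (hv' : v.im ≤ 0) : 0 ≤ dot2 u v := by
  unfold dot2; nlinarith [mul_nonneg hu hv, mul_nonneg_of_nonpos_of_nonpos hu' hv']

lemma cross2_nonpos_trans {u v w : ℂ} (hu : 0 ≤ u.re) (hv : 0 < v.re) (hw : 0 ≤ w.re)
    (huv : cross2 u v ≤ 0) (hvw : cross2 v w ≤ 0) : cross2 u w ≤ 0 := by
  unfold cross2 at *
  have h : v.re * (u.re * w.im) ≤ v.re * (u.im * w.re) := by
    nlinarith [mul_le_mul_of_nonneg_right huv hw, mul_le_mul_of_nonneg_left hvw hu]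
  linarith [le_of_mul_le_mul_left h hv]

lemma cross2_nonpos_of_chain {u : ℕ → ℂ} {l m : ℕ} (hlm : l ≤ m)
    (hre : ∀ k, l ≤ k → k ≤ m → 0 < (u k).re)
    (hturn : ∀ k, l ≤ k → k < m → cross2 (u k) (u (k + 1)) ≤ 0) :
    cross2 (u l) (u m) ≤ 0 := by
  induction m, hlm using Nat.le_induction with
  | base => simp [cross2, mul_comm]
  | succ m hlm ih =>
    exact cross2_nonpos_trans (hre l le_rfl (by omega)).le (hre m hlm (by omega))
      (hre (m + 1) (by omega) le_rfl).le
      (ih (fun k hk hkm => hre k hk (by omega)) (fun k hk hkm => hturn k hk (by omega)))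
      (hturn m hlm (by omega))

def wedgeBisector (e : ℂ) : ℂ := ‖e + Complex.I * e‖⁻¹ • (e + Complex.I * e)

lemma norm_wedgeBisector {e : ℂ} (he : e ≠ 0) : ‖wedgeBisector e‖ = 1 := by
  apply norm_smul_inv_norm
  rw [← one_add_mul]
  exact mul_ne_zero (by simp [Complex.ext_iff]) he

lemma norm_mul_cos_pi_div_four_le_dot2_wedgeBisector {e u : ℂ} (he : e ≠ 0)
    (hdot : 0 ≤ dot2 u e) (hcross : 0 ≤ cross2 e u) :
    ‖u‖ * cos (π / 4) ≤ dot2 u (wedgeBisector e) := by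
  have hsum : ‖u‖ * ‖e‖ ≤ dot2 u e + cross2 e u := by
    nlinarith [dot2_sq_add_cross2_sq u e, mul_nonneg hdot hcross,
      mul_nonneg (norm_nonneg u) (norm_nonneg e)]
  have hpos : 0 < √2 * ‖e‖ := by positivity
  rw [wedgeBisector, dot2_smul_right, dot2_add_I_mul_right, norm_add_I_mul, cos_pi_div_four,
    inv_mul_eq_div, le_div_iff₀ hpos]
  calc ‖u‖ * (√2 / 2) * (√2 * ‖e‖) = ‖u‖ * ‖e‖ * (√2 * √2 / 2) := by ring
    _ = ‖u‖ * ‖e‖ := by rw [Real.mul_self_sqrt zero_le_two]; ring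
    _ ≤ _ := hsum

theorem convex_path_region_angle_monotone_general (i : ℕ) (v : ℕ → ℂ)
    (hmono : ∀ q : ℕ, 1 ≤ q → q < i →
      (v q).re < (v (q + 1)).re ∧ (v (q + 1)).im < (v q).im)
    (hconv : ∀ q : ℕ, 1 ≤ q → q + 1 < i →
      cross2 (v (q + 1) - v q) (v (q + 2) - v (q + 1)) < 0)
    (q t : ℕ) (ht : 1 ≤ t) (hq : 2 ≤ q) (hqi : q ≤ i)
    (w : ℂ)
    (hwR : ∀ l : ℕ, 1 ≤ l → l < i → 0 ≤ cross2 (v (l + 1) - v l) (w - v l))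
    (hwl : 0 ≤ dot2 (w - v q) (v q - v (q - 1))) :
    (∀ l : ℕ, t ≤ l → l < q →
      0 ≤ dot2 (v (l + 1) - v l) (v q - v (q - 1)) ∧
      0 ≤ cross2 (v q - v (q - 1)) (v (l + 1) - v l)) ∧
    (0 ≤ dot2 (w - v q) (v q - v (q - 1)) ∧ 0 ≤ cross2 (v q - v (q - 1)) (w - v q)) ∧
    ∃ d : ℂ, ‖d‖ = 1 ∧
      (∀ l : ℕ, t ≤ l → l < q →
        ‖v (l + 1) - v l‖ * Real.cos (π / 4) ≤ dot2 (v (l + 1) - v l) d) ∧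
      ‖w - v q‖ * Real.cos (π / 4) ≤ dot2 (w - v q) d := by
  obtain ⟨p, rfl⟩ : ∃ p, q = p + 1 := ⟨q - 1, by omega⟩
  simp only [Nat.add_sub_cancel] at hwl ⊢
  have hedge : ∀ k, 1 ≤ k → k < i → 0 < (v (k + 1) - v k).re ∧ (v (k + 1) - v k).im < 0 := by
    intro k hk hki
    obtain ⟨hre, him⟩ := hmono k hk hki
    simp only [Complex.sub_re, Complex.sub_im]
    constructor <;> linarith
  obtain ⟨he_re, he_im⟩ := hedge p (by omega) (by omega)
  set e := v (p + 1) - v p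
  have he : e ≠ 0 := fun h => by simp [h] at he_re
  have hpath : ∀ l, t ≤ l → l < p + 1 →
      0 ≤ dot2 (v (l + 1) - v l) e ∧ 0 ≤ cross2 e (v (l + 1) - v l) := by
    intro l htl hlp
    obtain ⟨hl_re, hl_im⟩ := hedge l (by omega) (by omega)
    refine ⟨dot2_nonneg_of_re_nonneg_of_im_nonpos hl_re.le hl_im.le he_re.le he_im.le, ?_⟩
    rw [cross2_swap, neg_nonneg]
    exact cross2_nonpos_of_chain (u := fun k => v (k + 1) - v k) (by omega : l ≤ p)
      (fun k hk hkp => (hedge k (by omega) (by omega)).1)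
      (fun k hk hkp => (hconv k (by omega) (by omega)).le)
  have hw : 0 ≤ cross2 e (w - v (p + 1)) := by
    rw [cross2_sub_sub_sub_left]
    exact hwR p (by omega) (by omega)
  refine ⟨hpath, ⟨hwl, hw⟩, wedgeBisector e, norm_wedgeBisector he, fun l htl hlp => ?_,
    norm_mul_cos_pi_div_four_le_dot2_wedgeBisector he hwl hw⟩
  obtain ⟨hdot, hcross⟩ := hpath l htl hlp
  exact norm_mul_cos_pi_div_four_le_dot2_wedgeBisector he hdot hcross

/-- Let `v 1, …, v i` be an `(x,-y)`-convex path (x-coordinates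
strictly increasing, y-coordinates strictly decreasing, turning right).  Let `R` be the
region above the path (intersection of the closed half-planes to the left of each
directed edge), and let `R_q` be the part of `R` between the perpendicular rays `ℓ_q`
(at `v q`, orthogonal to the edge `v (q-1) v q`) and `ℓ_{q+1}`.  If `w ∈ R_q` and
`1 ≤ t ≤ q`, then every edge vector of the path `v t, …, v q, w` lies in the closed
`90°` wedge bounded by the direction of the edge `v (q-1) v q` and the direction of
`ℓ_q` (its left perpendicular); hence this path is angle-monotone of width `90°`. -/
theorem convex_path_region_angle_monotone (i : ℕ) (v : ℕ → ℂ)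
    (hmono : ∀ q : ℕ, 1 ≤ q → q < i →
      (v q).re < (v (q + 1)).re ∧ (v (q + 1)).im < (v q).im)
    (hconv : ∀ q : ℕ, 1 ≤ q → q + 1 < i →
      cross2 (v (q + 1) - v q) (v (q + 2) - v (q + 1)) < 0)
    (q t : ℕ) (ht : 1 ≤ t) (htq : t ≤ q) (hq : 2 ≤ q) (hqi : q ≤ i)
    (w : ℂ)
    (hwR : ∀ l : ℕ, 1 ≤ l → l < i → 0 ≤ cross2 (v (l + 1) - v l) (w - v l))
    (hwl : 0 ≤ dot2 (w - v q) (v q - v (q - 1)))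
    (hwr : q < i → dot2 (w - v (q + 1)) (v (q + 1) - v q) ≤ 0) :
    (∀ l : ℕ, t ≤ l → l < q →
      0 ≤ dot2 (v (l + 1) - v l) (v q - v (q - 1)) ∧
      0 ≤ cross2 (v q - v (q - 1)) (v (l + 1) - v l)) ∧
    (0 ≤ dot2 (w - v q) (v q - v (q - 1)) ∧ 0 ≤ cross2 (v q - v (q - 1)) (w - v q)) ∧
    ∃ d : ℂ, ‖d‖ = 1 ∧
      (∀ l : ℕ, t ≤ l → l < q →
        ‖v (l + 1) - v l‖ * Real.cos (π / 4) ≤ dot2 (v (l + 1) - v l) d) ∧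
      ‖w - v q‖ * Real.cos (π / 4) ≤ dot2 (w - v q) d :=
  convex_path_region_angle_monotone_general i v hmono hconv q t ht hq hqi w hwR hwl
end
end

section
/- Let W₁ and W₂ be closed wedges in the plane with apexes q and t respectively, and suppose a point r lies in W₁ ∩ W₂, where the segment from q through r stays in W₁ and the segment from t through r stays in W₂. If segments q r and t r properly cross at an interior point, then q ∈ W₂ or t ∈ W₁. -/
/-!
Write `X = B - A` and `Y = C - A`. The wedge at `q` is spanned by `X` and `Y`, the wedge at `t`
by `-X` and `Y - X`: both open towards the same side of lines parallel to `X`. Writing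
`r - q` and `r - t` in the basis `X, Y` and comparing their `Y`-coordinates, the apex lying
farther in the `Y`-direction belongs to the other wedge.
-/

open Real

noncomputable section

theorem inWedge_or_inWedge_of_inWedge_neg_sub {X Y q t r : ℂ} (h₁ : InWedge X Y q r)
    (h₂ : InWedge (-X) (Y - X) t r) : InWedge (-X) (Y - X) t q ∨ InWedge X Y q t := by
  obtain ⟨s, u, hs, hu, hq⟩ := h₁
  obtain ⟨s', u', hs', hu', ht⟩ := h₂
  rcases le_total u u' with h | h
  · exact .inl ⟨s + s' + u, u' - u, by positivity, sub_nonneg.2 h,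
      by linear_combination (norm := module) ht - hq⟩
  · exact .inr ⟨s + s' + u', u - u', by positivity, sub_nonneg.2 h,
      by linear_combination (norm := module) hq - ht⟩

theorem crossing_wedges_apex_general (A B C : ℂ)
    (q t r : ℂ)
    (hr1 : InWedge (B - A) (C - A) q r) (hr2 : InWedge (A - B) (C - B) t r) :
    InWedge (A - B) (C - B) t q ∨ InWedge (B - A) (C - A) q t := by
  rw [← neg_sub B A, ← sub_sub_sub_cancel_right C B A] at hr2 ⊢
  exact inWedge_or_inWedge_of_inWedge_neg_sub hr1 hr2

/-- Let `W₁ = W_{q,a}` and `W₂ = W_{t,b}` be the closed wedges with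
apexes `q` and `t` determined by an acute triangle `A B C` (in clockwise order).
Suppose a point `r` lies in `W₁ ∩ W₂` (the segments from `q` through `r` and from `t`
through `r` stay in the respective wedges, the wedges being convex), and `r` is interior
(distinct from both apexes, as when the two edges properly cross at `r`).  Then
`q ∈ W₂` or `t ∈ W₁`. -/
theorem crossing_wedges_apex (A B C : ℂ)
    (hacuteA : 0 < dot2 (B - A) (C - A)) (hacuteB : 0 < dot2 (A - B) (C - B))
    (hacuteC : 0 < dot2 (A - C) (B - C))
    (hcw : cross2 (B - A) (C - A) < 0)
    (q t r : ℂ) (hrq : r ≠ q) (hrt : r ≠ t)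
    (hr1 : InWedge (B - A) (C - A) q r) (hr2 : InWedge (A - B) (C - B) t r)
    (hseg1 : segment ℝ q r ⊆ {p : ℂ | InWedge (B - A) (C - A) q p})
    (hseg2 : segment ℝ t r ⊆ {p : ℂ | InWedge (A - B) (C - B) t p}) :
    InWedge (A - B) (C - B) t q ∨ InWedge (B - A) (C - A) q t :=
  crossing_wedges_apex_general A B C q t r hr1 hr2
end
end
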